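/- arXiv:1102.5380 — 2 statements merged into one kernel-verified Lean document; each statement's English description precedes it below -/
import Mathlib

section
/- Let (a^k)_k and (b^k)_k be two sequences of vectors belonging to the class 𝒮′. Then for every n ∈ ℕ, Trace[J(a^k,b^k)^n] = Σ_{j=0}^{⌊n/2⌋} n!/((j!)² (n−2j)!) · Σ_{i=1}^k (a_i^k)^{n−2j}(b_i^k)^{2j} + o(k) as k → ∞. -/
open Filter MeasureTheory

noncomputable section

/-- The `k × k` Jacobi (real symmetric tridiagonal) matrix with diagonal entries
`a 0, …, a (k-1)` and sub/super-diagonal entries `b 0, …, b (k-2)` (0-indexed). -/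
def jacobiMatrix (k : ℕ) (a b : ℕ → ℝ) : Matrix (Fin k) (Fin k) ℝ :=
  Matrix.of fun i j =>
    if (i : ℕ) = (j : ℕ) then a i
    else if (i : ℕ) + 1 = (j : ℕ) then b i
    else if (j : ℕ) + 1 = (i : ℕ) then b j
    else 0

theorem jacobiMatrix_isHermitian (k : ℕ) (a b : ℕ → ℝ) :
    (jacobiMatrix k a b).IsHermitian := by
  show _ = _
  ext i j
  simp only [Matrix.conjTranspose_apply, jacobiMatrix, Matrix.of_apply, star_trivial]
  by_cases h1 : (i : ℕ) = (j : ℕ)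
  · have h : i = j := Fin.ext h1
    subst h
    rfl
  · have h1' : ¬ (j : ℕ) = (i : ℕ) := fun h => h1 h.symm
    by_cases h2 : (i : ℕ) + 1 = (j : ℕ)
    · have h3 : ¬ (j : ℕ) + 1 = (i : ℕ) := by omega
      simp [h1, h1', h2, h3]
    · by_cases h3 : (j : ℕ) + 1 = (i : ℕ) <;> simp [h1, h1', h2, h3]

/-- `Trace[φ(J(a,b))] = ∑ⱼ φ(λⱼ)`, the sum of `φ` over the eigenvalues of the Jacobi matrix. -/
def jacobiTrace (k : ℕ) (a b : ℕ → ℝ) (φ : ℝ → ℝ) : ℝ :=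
  ∑ i, φ ((jacobiMatrix_isHermitian k a b).eigenvalues i)

/-- The class `𝒮`: small deviations `∑ᵢ |a_{i+1}^k − a_i^k| = o(k)` and entries in `[0,1]`. -/
def MemS (a : ℕ → ℕ → ℝ) : Prop :=
  ((fun k : ℕ => ∑ i ∈ Finset.range (k - 1), |a k (i + 1) - a k i|)
      =o[Filter.atTop] fun k : ℕ => (k : ℝ)) ∧
  ∀ k : ℕ, ∀ i < k, a k i ∈ Set.Icc (0 : ℝ) 1

/-- The class `𝒮′`: for every `δ ∈ (0,1)`, `∑ᵢ |a_{i+1}^k − a_i^k| = O(k^{1−δ})`, and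
`maxᵢ |a_i^k| = O(log k)`. -/
def MemS' (a : ℕ → ℕ → ℝ) : Prop :=
  (∀ δ : ℝ, δ ∈ Set.Ioo (0 : ℝ) 1 →
    ((fun k : ℕ => ∑ i ∈ Finset.range (k - 1), |a k (i + 1) - a k i|)
        =O[Filter.atTop] fun k : ℕ => (k : ℝ) ^ (1 - δ))) ∧
  ∃ C : ℝ, ∀ᶠ k : ℕ in Filter.atTop, ∀ i < k, |a k i| ≤ C * Real.log k

/-- `μ`-distributed on `I² = [0,1]²`. -/
def MuDistributedI (a b : ℕ → ℕ → ℝ) (μ : Measure (ℝ × ℝ)) : Prop :=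
  ∀ ψ : ℝ × ℝ → ℝ, ContinuousOn ψ (Set.Icc (0 : ℝ) 1 ×ˢ Set.Icc (0 : ℝ) 1) →
    Filter.Tendsto (fun k : ℕ => (1 / (k : ℝ)) * ∑ j ∈ Finset.range k, ψ (a k j, b k j))
      Filter.atTop (nhds (∫ p, ψ p ∂μ))

/-- `μ`-distributed on `ℝ²` (test functions: bounded continuous). -/
def MuDistributedR (a b : ℕ → ℕ → ℝ) (μ : Measure (ℝ × ℝ)) : Prop :=
  ∀ ψ : ℝ × ℝ → ℝ, Continuous ψ → (∃ C : ℝ, ∀ p, |ψ p| ≤ C) →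
    Filter.Tendsto (fun k : ℕ => (1 / (k : ℝ)) * ∑ j ∈ Finset.range k, ψ (a k j, b k j))
      Filter.atTop (nhds (∫ p, ψ p ∂μ))

/-- Tightness via closed bounded rectangles. -/
def TightRect (μ : Measure (ℝ × ℝ)) : Prop :=
  ∀ ε : ℝ, 0 < ε → ∃ x₁ x₂ y₁ y₂ : ℝ,
    μ ((Set.Icc x₁ x₂ ×ˢ Set.Icc y₁ y₂)ᶜ) < ENNReal.ofReal ε

/-- Almost everywhere increasing sequence of vectors. -/
def AEIncreasing (a : ℕ → ℕ → ℝ) : Prop :=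
  Filter.Tendsto
    (fun k : ℕ => (((Finset.range (k - 1)).filter fun i => a k i ≤ a k (i + 1)).card : ℝ) / k)
    Filter.atTop (nhds 1)

/-- Almost everywhere decreasing sequence of vectors. -/
def AEDecreasing (a : ℕ → ℕ → ℝ) : Prop :=
  Filter.Tendsto
    (fun k : ℕ => (((Finset.range (k - 1)).filter fun i => a k (i + 1) ≤ a k i).card : ℝ) / k)
    Filter.atTop (nhds 1)

/-- Almost everywhere monotone sequence of vectors. -/
def AEMonotone (a : ℕ → ℕ → ℝ) : Prop :=
  AEIncreasing a ∨ AEDecreasing a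

/-!
Freeze the coefficients of `J = J(a, b)` at an index `i` that is at distance at least `n` from
both ends of `{0, …, k - 1}`: the resulting constant Jacobi matrix `M` is, near `i`, a piece of the
bi-infinite Toeplitz matrix, so `(Mⁿ)ᵢᵢ` is the constant term of `(aᵢ + bᵢ z + bᵢ z⁻¹)ⁿ`, which is
`∑ⱼ n! / ((j!)² (n - 2j)!) aᵢ^(n-2j) bᵢ^(2j)`. Writing
`Jⁿ - Mⁿ = ∑ₗ Jⁿ⁻¹⁻ˡ (J - M) Mˡ` and using that row `i` of `Mˡ` lives within distance `l` of `i`,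
`|(Jⁿ)ᵢᵢ - (Mⁿ)ᵢᵢ|` is at most `n (3L)ⁿ⁻¹` times the variation of `a` and `b` over a window of
width `2n` around `i`, where `L` bounds the entries. Summing over `i` counts each increment at most
`2n` times, and the `2n` indices near the ends contribute `O((3L)ⁿ)` each. For sequences in `𝒮′`
we may take `L = O(log k)`, and the total variation is `O(k^(1/2))`, so the error is
`O(logⁿ k + k^(1/2) logⁿ⁻¹ k) = o(k)`.
-/

open Finset Matrix Asymptotics

/-- Entry `(i, i + d)` of the `n`-th power of the bi-infinite tridiagonal Toeplitz matrix with
diagonal `x` and off-diagonals `y`, i.e. the coefficient of `z ^ d` in `(x + y z + y z⁻¹) ^ n`. -/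
def tridiagToeplitzPow (x y : ℝ) : ℕ → ℤ → ℝ
  | 0, d => if d = 0 then 1 else 0
  | n + 1, d => x * tridiagToeplitzPow x y n d + y * tridiagToeplitzPow x y n (d - 1) +
      y * tridiagToeplitzPow x y n (d + 1)

open Polynomial in
theorem coeff_one_add_X_sq_pow_self (m : ℕ) :
    ((1 + X ^ 2 : ℝ[X]) ^ m).coeff m = if 2 ∣ m then (m.choose (m / 2) : ℝ) else 0 := by
  rw [show (1 + X ^ 2 : ℝ[X]) ^ m = expand ℝ 2 ((1 + X) ^ m) by simp, coeff_expand two_pos,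
    coeff_one_add_X_pow]

theorem cast_choose_two_mul_mul_choose (n j : ℕ) (h : 2 * j ≤ n) :
    (n.choose (2 * j) : ℝ) * ((2 * j).choose j : ℝ) =
      n.factorial / ((j.factorial : ℝ) ^ 2 * (n - 2 * j).factorial) := by
  rw [Nat.cast_choose ℝ h, Nat.cast_choose ℝ (by omega : j ≤ 2 * j),
    show 2 * j - j = j by omega]
  field_simp

theorem filter_two_dvd_range_succ (n : ℕ) :
    (range (n + 1)).filter (2 ∣ ·) =
      (range (n / 2 + 1)).map ⟨(2 * ·), mul_right_injective₀ two_ne_zero⟩ := by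
  ext m
  simp only [mem_filter, mem_range, Finset.mem_map, Function.Embedding.coeFn_mk]
  constructor
  · rintro ⟨hm, j, rfl⟩
    exact ⟨j, by omega, rfl⟩
  · rintro ⟨j, hj, rfl⟩
    exact ⟨by omega, dvd_mul_right 2 j⟩

namespace tridiagToeplitzPow

open Polynomial

variable (x y : ℝ)

theorem zero_apply (d : ℤ) : tridiagToeplitzPow x y 0 d = if d = 0 then 1 else 0 := rfl

theorem succ_apply (n : ℕ) (d : ℤ) :
    tridiagToeplitzPow x y (n + 1) d = x * tridiagToeplitzPow x y n d +
      y * tridiagToeplitzPow x y n (d - 1) + y * tridiagToeplitzPow x y n (d + 1) := rfl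

theorem eq_zero_of_lt_abs {n : ℕ} {d : ℤ} (hd : (n : ℤ) < |d|) :
    tridiagToeplitzPow x y n d = 0 := by
  induction n generalizing d with
  | zero => simp_all [zero_apply]
  | succ n ih =>
    rw [lt_abs] at hd
    rw [succ_apply, ih (by rw [lt_abs]; omega), ih (by rw [lt_abs]; omega),
      ih (by rw [lt_abs]; omega)]
    ring

theorem abs_le_three_mul_pow {L : ℝ} (hx : |x| ≤ L) (hy : |y| ≤ L) (n : ℕ) (d : ℤ) :
    |tridiagToeplitzPow x y n d| ≤ (3 * L) ^ n := by
  induction n generalizing d with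
  | zero => by_cases h : d = 0 <;> simp [zero_apply, h]
  | succ n ih =>
    have hL : 0 ≤ L := (abs_nonneg x).trans hx
    have term : ∀ c, |c| ≤ L → ∀ d', |c * tridiagToeplitzPow x y n d'| ≤ L * (3 * L) ^ n :=
      fun c hc d' => by rw [abs_mul]; exact mul_le_mul hc (ih d') (abs_nonneg _) hL
    calc |tridiagToeplitzPow x y (n + 1) d|
        ≤ |x * tridiagToeplitzPow x y n d| + |y * tridiagToeplitzPow x y n (d - 1)| +
            |y * tridiagToeplitzPow x y n (d + 1)| := abs_add_three _ _ _
      _ ≤ L * (3 * L) ^ n + L * (3 * L) ^ n + L * (3 * L) ^ n := by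
          gcongr <;> apply term <;> assumption
      _ = (3 * L) ^ (n + 1) := by ring

theorem eq_coeff (n m : ℕ) :
    tridiagToeplitzPow x y n ((m : ℤ) - n) = ((C y + C x * X + C y * X ^ 2) ^ n).coeff m := by
  induction n generalizing m with
  | zero => by_cases h : m = 0 <;> simp [zero_apply, coeff_one, h]
  | succ n ih =>
    have hsplit : (C y + C x * X + C y * X ^ 2 : ℝ[X]) ^ (n + 1) =
        (C y + C x * X + C y * X ^ 2) ^ n * C y +
          (C y + C x * X + C y * X ^ 2) ^ n * C x * X ^ 1 +
          (C y + C x * X + C y * X ^ 2) ^ n * C y * X ^ 2 := by ring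
    rw [hsplit, succ_apply]
    simp only [coeff_add, coeff_mul_X_pow', coeff_mul_C, ← ih]
    rcases m with _ | _ | m
    · rw [eq_zero_of_lt_abs x y (d := (0 : ℕ) - ((n + 1 : ℕ) : ℤ)) (by rw [lt_abs]; omega),
        eq_zero_of_lt_abs x y (d := (0 : ℕ) - ((n + 1 : ℕ) : ℤ) - 1) (by rw [lt_abs]; omega)]
      simp [mul_comm]
    · rw [eq_zero_of_lt_abs x y (d := (1 : ℕ) - ((n + 1 : ℕ) : ℤ) - 1) (by rw [lt_abs]; omega),
        if_pos le_rfl, if_neg (by omega)]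
      push_cast
      ring_nf
    · rw [if_pos (by omega), if_pos (by omega), show m + 1 + 1 - 2 = m by omega]
      push_cast
      ring_nf

theorem zero_eq_sum (n : ℕ) :
    tridiagToeplitzPow x y n 0 = ∑ j ∈ range (n / 2 + 1),
      (n.factorial : ℝ) / ((j.factorial : ℝ) ^ 2 * (n - 2 * j).factorial) *
        (x ^ (n - 2 * j) * y ^ (2 * j)) := by
  have hP : (C y + C x * X + C y * X ^ 2 : ℝ[X]) = C y * (1 + X ^ 2) + C x * X := by ring
  have hcoeff := eq_coeff x y n n
  rw [sub_self, hP, add_pow, finsetSum_coeff] at hcoeff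
  have hterm : ∀ m ∈ range (n + 1),
      ((C y * (1 + X ^ 2)) ^ m * (C x * X) ^ (n - m) * (n.choose m : ℝ[X])).coeff n =
        if 2 ∣ m then y ^ m * x ^ (n - m) * n.choose m * (m.choose (m / 2) : ℝ) else 0 := by
    intro m hm
    have hmn : m ≤ n := Nat.lt_succ_iff.mp (mem_range.mp hm)
    rw [show (C y * (1 + X ^ 2)) ^ m * (C x * X) ^ (n - m) * (n.choose m : ℝ[X]) =
        C (y ^ m * x ^ (n - m) * n.choose m) * ((1 + X ^ 2) ^ m * X ^ (n - m)) by
      simp only [mul_pow, map_mul, map_pow, map_natCast]; ring,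
      coeff_C_mul, coeff_mul_X_pow', if_pos (Nat.sub_le n m), Nat.sub_sub_self hmn,
      coeff_one_add_X_sq_pow_self]
    split_ifs <;> ring
  rw [hcoeff, sum_congr rfl hterm, ← sum_filter, filter_two_dvd_range_succ, sum_map]
  refine sum_congr rfl fun j hj => ?_
  simp only [Function.Embedding.coeFn_mk, Nat.mul_div_cancel_left j two_pos]
  rw [← cast_choose_two_mul_mul_choose n j (by have := mem_range.mp hj; omega)]
  ring

end tridiagToeplitzPow

section RowSums

variable {ι κ : Type*} [Fintype ι] [Fintype κ]

theorem sum_abs_vecMul_le (v : ι → ℝ) (A : Matrix ι κ ℝ) :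
    ∑ q, |(v ᵥ* A) q| ≤ ∑ p, |v p| * ∑ q, |A p q| := by
  calc ∑ q, |(v ᵥ* A) q| ≤ ∑ q, ∑ p, |v p| * |A p q| :=
        sum_le_sum fun q _ => (abs_sum_le_sum_abs _ _).trans_eq (by simp [abs_mul])
    _ = ∑ p, |v p| * ∑ q, |A p q| := by rw [sum_comm]; simp only [mul_sum]

theorem sum_abs_vecMul_le_of_rowSum_le {A : Matrix ι κ ℝ} {R : ℝ}
    (hA : ∀ p, ∑ q, |A p q| ≤ R) (v : ι → ℝ) :
    ∑ q, |(v ᵥ* A) q| ≤ R * ∑ p, |v p| := by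
  rw [mul_sum]
  exact (sum_abs_vecMul_le v A).trans
    (sum_le_sum fun p _ => by rw [mul_comm]; exact mul_le_mul_of_nonneg_right (hA p) (abs_nonneg _))

variable [DecidableEq ι]

theorem sum_abs_vecMul_pow_le {A : Matrix ι ι ℝ} {R : ℝ} (hR : 0 ≤ R)
    (hA : ∀ p, ∑ q, |A p q| ≤ R) (v : ι → ℝ) (l : ℕ) :
    ∑ q, |(v ᵥ* A ^ l) q| ≤ R ^ l * ∑ p, |v p| := by
  induction l with
  | zero => simp
  | succ l ih =>
    rw [pow_succ, ← vecMul_vecMul, pow_succ, mul_comm (R ^ l) R, mul_assoc]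
    exact (sum_abs_vecMul_le_of_rowSum_le hA _).trans (mul_le_mul_of_nonneg_left ih hR)

theorem sum_abs_vecMul_pow_sub_le {J M : Matrix ι ι ℝ} {R δ : ℝ} (hR : 0 ≤ R) (hδ : 0 ≤ δ)
    (hJ : ∀ p, ∑ q, |J p q| ≤ R) (hM : ∀ p, ∑ q, |M p q| ≤ R) (v : ι → ℝ) (n : ℕ)
    (hJM : ∀ l < n, ∀ p, (v ᵥ* M ^ l) p ≠ 0 → ∑ q, |(J - M) p q| ≤ δ) :
    ∑ q, |(v ᵥ* J ^ n - v ᵥ* M ^ n) q| ≤ n * R ^ (n - 1) * δ * ∑ p, |v p| := by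
  induction n with
  | zero => simp
  | succ n ih =>
    have hsplit : v ᵥ* J ^ (n + 1) - v ᵥ* M ^ (n + 1) =
        (v ᵥ* J ^ n - v ᵥ* M ^ n) ᵥ* J + (v ᵥ* M ^ n) ᵥ* (J - M) := by
      simp only [pow_succ, ← vecMul_vecMul, sub_vecMul, vecMul_sub]
      abel
    have hold := (sum_abs_vecMul_le_of_rowSum_le hJ _).trans
      (mul_le_mul_of_nonneg_left (ih fun l hl => hJM l (by omega)) hR)
    have hnew : ∑ q, |((v ᵥ* M ^ n) ᵥ* (J - M)) q| ≤ δ * (R ^ n * ∑ p, |v p|) := by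
      calc ∑ q, |((v ᵥ* M ^ n) ᵥ* (J - M)) q|
          ≤ ∑ p, |(v ᵥ* M ^ n) p| * ∑ q, |(J - M) p q| := sum_abs_vecMul_le _ _
        _ ≤ ∑ p, δ * |(v ᵥ* M ^ n) p| := sum_le_sum fun p _ => by
            by_cases hp : (v ᵥ* M ^ n) p = 0
            · simp [hp]
            · rw [mul_comm]
              exact mul_le_mul_of_nonneg_right (hJM n n.lt_succ_self p hp) (abs_nonneg _)
        _ = δ * ∑ p, |(v ᵥ* M ^ n) p| := (mul_sum _ _ _).symm
        _ ≤ δ * (R ^ n * ∑ p, |v p|) :=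
            mul_le_mul_of_nonneg_left (sum_abs_vecMul_pow_le hR hM v n) hδ
    calc ∑ q, |(v ᵥ* J ^ (n + 1) - v ᵥ* M ^ (n + 1)) q|
        ≤ ∑ q, |((v ᵥ* J ^ n - v ᵥ* M ^ n) ᵥ* J) q| + ∑ q, |((v ᵥ* M ^ n) ᵥ* (J - M)) q| := by
          rw [hsplit, ← sum_add_distrib]
          exact sum_le_sum fun q _ => abs_add_le _ _
      _ ≤ R * (n * R ^ (n - 1) * δ * ∑ p, |v p|) + δ * (R ^ n * ∑ p, |v p|) :=
          add_le_add hold hnew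
      _ = (n + 1 : ℕ) * R ^ n * δ * ∑ p, |v p| := by
          rcases n with _ | n
          · simp
          · push_cast
            ring

end RowSums

theorem jacobiMatrix_sub (k : ℕ) (a b a' b' : ℕ → ℝ) :
    jacobiMatrix k a b - jacobiMatrix k a' b' = jacobiMatrix k (a - a') (b - b') := by
  ext i j
  simp only [jacobiMatrix, Matrix.sub_apply, of_apply, Pi.sub_apply]
  split_ifs <;> ring

theorem sum_abs_jacobiMatrix_row_le (k : ℕ) (a b : ℕ → ℝ) (p : Fin k) :
    ∑ q, |jacobiMatrix k a b p q| ≤ |a p| + |b p| + |b (p - 1)| := by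
  have hsingle : ∀ (m : ℕ) (c : ℝ), 0 ≤ c → ∑ q ∈ range k, (if q = m then c else 0) ≤ c :=
    fun m c hc => by rw [sum_ite_eq']; split_ifs <;> simp [hc]
  simp only [jacobiMatrix, of_apply]
  rw [Fin.sum_univ_eq_sum_range (fun q : ℕ => |if (p : ℕ) = q then a p else if (p : ℕ) + 1 = q
    then b p else if q + 1 = p then b q else 0|) k]
  calc _ ≤ ∑ q ∈ range k, ((if q = p then |a p| else 0) + (if q = p + 1 then |b p| else 0) +
          (if q = p - 1 then |b (p - 1)| else 0)) := by
        refine sum_le_sum fun q _ => ?_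
        have := abs_nonneg (a p); have := abs_nonneg (b p); have := abs_nonneg (b (p - 1))
        split_ifs <;> first | omega | linarith [abs_zero (α := ℝ)] |
          (rw [show q = p - 1 by omega]; linarith)
    _ ≤ |a p| + |b p| + |b (p - 1)| := by
        simp only [sum_add_distrib]
        gcongr <;> exact hsingle _ _ (abs_nonneg _)

/-- In `b (q - 1)` the subtraction is in `ℕ`, so at `q = 0` the middle term reads
`b 0 * f (-1)`; it vanishes by `hlo`. -/
theorem vecMul_jacobiMatrix {k : ℕ} (a b : ℕ → ℝ) (f : ℤ → ℝ) (hlo : f (-1) = 0)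
    (hhi : f k = 0) (q : Fin k) :
    ((fun p : Fin k => f p) ᵥ* jacobiMatrix k a b) q =
      a q * f q + b (q - 1) * f (q - 1) + b q * f (q + 1) := by
  simp only [vecMul, dotProduct, jacobiMatrix, of_apply]
  rw [Fin.sum_univ_eq_sum_range (fun p : ℕ => f p * if p = (q : ℕ) then a p else
    if p + 1 = q then b p else if (q : ℕ) + 1 = p then b q else 0) k]
  obtain ⟨m, hm⟩ := q
  simp only
  have hsplit : ∀ p : ℕ, (f p * if p = m then a p else if p + 1 = m then b p else
      if m + 1 = p then b m else 0) = (if p = m then a m * f m else 0) +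
        (if p + 1 = m then b (m - 1) * f ((m : ℤ) - 1) else 0) +
        (if p = m + 1 then b m * f ((m : ℤ) + 1) else 0) := by
    intro p
    split_ifs <;> first | omega | (subst_vars; simp [mul_comm])
  simp only [hsplit, sum_add_distrib, sum_ite_eq', mem_range, if_pos hm]
  have hmid : (∑ p ∈ range k, if p + 1 = m then b (m - 1) * f ((m : ℤ) - 1) else 0) =
      b (m - 1) * f ((m : ℤ) - 1) := by
    rcases m with _ | m
    · simp [hlo]
    · simp only [Nat.add_right_cancel_iff, sum_ite_eq', mem_range]
      rw [if_pos (by omega)]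
  have hlast : (if m + 1 < k then b m * f ((m : ℤ) + 1) else 0) = b m * f ((m : ℤ) + 1) := by
    split_ifs with h
    · rfl
    · rw [show (m : ℤ) + 1 = k by omega, hhi, mul_zero]
  rw [hmid, hlast]

theorem sum_abs_jacobiMatrix_row_le_of_abs_le {k : ℕ} {a b : ℕ → ℝ} {L : ℝ}
    (ha : ∀ i < k, |a i| ≤ L) (hb : ∀ i < k, |b i| ≤ L) (p : Fin k) :
    ∑ q, |jacobiMatrix k a b p q| ≤ 3 * L := by
  linarith [sum_abs_jacobiMatrix_row_le k a b p, ha p p.2, hb p p.2, hb (p - 1) (by omega)]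

theorem single_vecMul_jacobiMatrix_const_pow {k : ℕ} (x y : ℝ) (i : Fin k) {l : ℕ}
    (hl : l ≤ i) (hlk : (i : ℕ) + l < k) :
    Pi.single i 1 ᵥ* jacobiMatrix k (fun _ => x) (fun _ => y) ^ l =
      fun p : Fin k => tridiagToeplitzPow x y l ((p : ℤ) - i) := by
  induction l with
  | zero =>
    ext p
    simp [Pi.single_apply, tridiagToeplitzPow.zero_apply, Fin.ext_iff, sub_eq_zero, eq_comm]
  | succ l ih =>
    ext q
    rw [pow_succ, ← vecMul_vecMul, ih (by omega) (by omega),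
      vecMul_jacobiMatrix _ _ (fun d => tridiagToeplitzPow x y l (d - i))
        (tridiagToeplitzPow.eq_zero_of_lt_abs x y (by rw [lt_abs]; omega))
        (tridiagToeplitzPow.eq_zero_of_lt_abs x y (by rw [lt_abs]; omega)),
      tridiagToeplitzPow.succ_apply]
    ring_nf

theorem abs_sub_le_sum_range_abs_sub (f : ℕ → ℝ) {j m u : ℕ} (hju : j ≤ u) (hum : u ≤ j + m) :
    |f u - f j| ≤ ∑ t ∈ range m, |f (j + t + 1) - f (j + t)| := by
  have htel := sum_range_sub (fun t => f (j + t)) (u - j)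
  rw [Nat.add_sub_cancel' hju, add_zero] at htel
  rw [← htel]
  exact (abs_sum_le_sum_abs _ _).trans (sum_le_sum_of_subset_of_nonneg
    (range_subset_range.mpr (by omega)) fun _ _ _ => abs_nonneg _)

theorem abs_sub_le_two_mul_sum_range_abs_sub (f : ℕ → ℝ) {j m u v : ℕ} (hju : j ≤ u)
    (hum : u ≤ j + m) (hjv : j ≤ v) (hvm : v ≤ j + m) :
    |f u - f v| ≤ 2 * ∑ t ∈ range m, |f (j + t + 1) - f (j + t)| := by
  have hu := abs_sub_le_sum_range_abs_sub f hju hum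
  have hv := abs_sub_le_sum_range_abs_sub f hjv hvm
  rw [abs_sub_comm] at hv
  linarith [abs_sub_le (f u) (f j) (f v)]

theorem sum_range_sum_range_add_le {c : ℕ → ℝ} (hc : ∀ s, 0 ≤ c s) (N m : ℕ) :
    ∑ j ∈ range N, ∑ t ∈ range m, c (j + t) ≤ m * ∑ s ∈ range (N + m - 1), c s := by
  calc ∑ j ∈ range N, ∑ t ∈ range m, c (j + t) = ∑ t ∈ range m, ∑ j ∈ range N, c (j + t) :=
        sum_comm
    _ ≤ ∑ t ∈ range m, ∑ s ∈ range (N + m - 1), c s := sum_le_sum fun t ht => by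
        have hIco : ∑ j ∈ range N, c (j + t) = ∑ s ∈ Ico t (t + N), c s := by
          rw [sum_Ico_eq_sum_range, Nat.add_sub_cancel_left]
          simp only [add_comm]
        rw [hIco]
        have ht := mem_range.mp ht
        exact sum_le_sum_of_subset_of_nonneg
          (fun s hs => by simp only [mem_Ico, mem_range] at hs ⊢; omega) fun s _ _ => hc s
    _ = m * ∑ s ∈ range (N + m - 1), c s := by simp

theorem abs_jacobiMatrix_pow_diag_sub_le {k n : ℕ} {a b : ℕ → ℝ} {L : ℝ} (hL : 0 ≤ L)
    (ha : ∀ i < k, |a i| ≤ L) (hb : ∀ i < k, |b i| ≤ L) (i : Fin k) {j : ℕ}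
    (hij : (i : ℕ) = j + n) (hik : (i : ℕ) + n < k) :
    |(jacobiMatrix k a b ^ n) i i - tridiagToeplitzPow (a i) (b i) n 0| ≤
      n * (3 * L) ^ (n - 1) * (4 * (∑ t ∈ range (2 * n), |a (j + t + 1) - a (j + t)| +
        ∑ t ∈ range (2 * n), |b (j + t + 1) - b (j + t)|)) := by
  set M := jacobiMatrix k (fun _ => a i) (fun _ => b i)
  have hJ := sum_abs_jacobiMatrix_row_le_of_abs_le ha hb
  have hM : ∀ p, ∑ q, |M p q| ≤ 3 * L :=
    sum_abs_jacobiMatrix_row_le_of_abs_le (fun _ _ => ha i i.2) (fun _ _ => hb i i.2)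
  have hrow : ∀ l ≤ n, Pi.single i 1 ᵥ* M ^ l =
      fun p : Fin k => tridiagToeplitzPow (a i) (b i) l ((p : ℤ) - i) :=
    fun l hl => single_vecMul_jacobiMatrix_const_pow _ _ i (by omega) (by omega)
  have hJM : ∀ l < n, ∀ p, (Pi.single i 1 ᵥ* M ^ l) p ≠ 0 →
      ∑ q, |(jacobiMatrix k a b - M) p q| ≤ 4 * (∑ t ∈ range (2 * n), |a (j + t + 1) - a (j + t)| +
        ∑ t ∈ range (2 * n), |b (j + t + 1) - b (j + t)|) := by
    intro l hl p hp
    rw [hrow l hl.le] at hp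
    have hp : |(p : ℤ) - i| ≤ l :=
      not_lt.mp fun h => hp (tridiagToeplitzPow.eq_zero_of_lt_abs _ _ h)
    rw [abs_le] at hp
    rw [jacobiMatrix_sub]
    refine (sum_abs_jacobiMatrix_row_le k _ _ p).trans ?_
    simp only [Pi.sub_apply]
    have : 0 ≤ ∑ t ∈ range (2 * n), |a (j + t + 1) - a (j + t)| := by positivity
    have hwin : ∀ (f : ℕ → ℝ) (u : ℕ), j ≤ u → u ≤ j + 2 * n →
        |f u - f i| ≤ 2 * ∑ t ∈ range (2 * n), |f (j + t + 1) - f (j + t)| :=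
      fun f u hju hun => abs_sub_le_two_mul_sum_range_abs_sub f hju hun (by omega) (by omega)
    linarith [hwin a p (by omega) (by omega), hwin b p (by omega) (by omega),
      hwin b (p - 1) (by omega) (by omega)]
  have hsingle : ∑ p, |(Pi.single i 1 : Fin k → ℝ) p| = 1 := by
    simp [Pi.single_apply, apply_ite]
  calc |(jacobiMatrix k a b ^ n) i i - tridiagToeplitzPow (a i) (b i) n 0|
      = |(Pi.single i 1 ᵥ* jacobiMatrix k a b ^ n - Pi.single i 1 ᵥ* M ^ n) i| := by
        rw [Pi.sub_apply, single_one_vecMul, hrow n le_rfl]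
        simp
    _ ≤ ∑ q, |(Pi.single i 1 ᵥ* jacobiMatrix k a b ^ n - Pi.single i 1 ᵥ* M ^ n) q| :=
        single_le_sum (f := fun q => |_|) (fun _ _ => abs_nonneg _) (mem_univ i)
    _ ≤ _ := (sum_abs_vecMul_pow_sub_le (by positivity) (by positivity) hJ hM _ n hJM).trans_eq
        (by rw [hsingle, mul_one])

theorem sum_le_boundary_add_interior {k n : ℕ} (d : Fin k → ℝ) (E : ℕ → ℝ) {B : ℝ} (hB0 : 0 ≤ B)
    (hB : ∀ i, d i ≤ B)
    (hE : ∀ (i : Fin k) (j : ℕ), (i : ℕ) = j + n → (i : ℕ) + n < k → d i ≤ E j) :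
    ∑ i, d i ≤ 2 * n * B + ∑ j ∈ range (k - 2 * n), E j := by
  have hconst : ∀ m (e : Fin m → Fin k), ∑ i, d (e i) ≤ m * B := fun m e =>
    (sum_le_sum fun i _ => hB (e i)).trans_eq (by simp)
  rcases lt_or_ge k (2 * n) with hk | hk
  · rw [Nat.sub_eq_zero_of_le hk.le, range_zero, sum_empty, add_zero]
    calc ∑ i, d i ≤ k * B := hconst k id
      _ ≤ 2 * n * B := mul_le_mul_of_nonneg_right (by exact_mod_cast hk.le) hB0
  · obtain ⟨N, rfl⟩ : ∃ N, k = n + N + n := ⟨k - 2 * n, by omega⟩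
    rw [Fin.sum_univ_add, Fin.sum_univ_add, show n + N + n - 2 * n = N by omega,
      ← Fin.sum_univ_eq_sum_range]
    have hmid : ∑ j : Fin N, d (Fin.castAdd n (Fin.natAdd n j)) ≤ ∑ j : Fin N, E j :=
      sum_le_sum fun j _ => hE _ j (by simp [add_comm]) (by simp)
    linarith [hconst n fun i => Fin.castAdd n (Fin.castAdd N i), hconst n (Fin.natAdd (n + N))]

theorem abs_trace_jacobiMatrix_pow_sub_le (k n : ℕ) {a b : ℕ → ℝ} {L : ℝ} (hL : 0 ≤ L)
    (ha : ∀ i < k, |a i| ≤ L) (hb : ∀ i < k, |b i| ≤ L) :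
    |trace (jacobiMatrix k a b ^ n) - ∑ i : Fin k, tridiagToeplitzPow (a i) (b i) n 0| ≤
      4 * n * (3 * L) ^ n + 8 * n ^ 2 * (3 * L) ^ (n - 1) *
        (∑ m ∈ range (k - 1), |a (m + 1) - a m| + ∑ m ∈ range (k - 1), |b (m + 1) - b m|) := by
  have hdiag : ∀ i : Fin k, |(jacobiMatrix k a b ^ n) i i| ≤ (3 * L) ^ n := fun i => by
    calc |(jacobiMatrix k a b ^ n) i i| ≤ ∑ q, |(jacobiMatrix k a b ^ n) i q| :=
          single_le_sum (f := fun q => |_|) (fun _ _ => abs_nonneg _) (mem_univ i)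
      _ ≤ (3 * L) ^ n := by
          simpa [Pi.single_apply, apply_ite] using sum_abs_vecMul_pow_le (by positivity)
            (sum_abs_jacobiMatrix_row_le_of_abs_le ha hb) (Pi.single i 1) n
  have hboundary : ∀ i : Fin k,
      |(jacobiMatrix k a b ^ n) i i - tridiagToeplitzPow (a i) (b i) n 0| ≤ 2 * (3 * L) ^ n :=
    fun i => (abs_sub _ _).trans (by
      linarith [hdiag i, tridiagToeplitzPow.abs_le_three_mul_pow _ _ (ha i i.2) (hb i i.2) n 0])
  have hvar : ∀ f : ℕ → ℝ, ∑ j ∈ range (k - 2 * n), ∑ t ∈ range (2 * n),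
      |f (j + t + 1) - f (j + t)| ≤ 2 * n * ∑ m ∈ range (k - 1), |f (m + 1) - f m| := by
    intro f
    rcases le_or_gt (2 * n) k with hk | hk
    · have := sum_range_sum_range_add_le (c := fun s => |f (s + 1) - f s|)
        (fun _ => abs_nonneg _) (k - 2 * n) (2 * n)
      rwa [show k - 2 * n + 2 * n - 1 = k - 1 by omega, Nat.cast_mul, Nat.cast_two] at this
    · rw [Nat.sub_eq_zero_of_le hk.le, range_zero, sum_empty]
      positivity
  rw [trace, ← sum_sub_distrib]
  refine (abs_sum_le_sum_abs _ _).trans <| (sum_le_boundary_add_interior _ _ (by positivity)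
    hboundary fun i j hij hik => abs_jacobiMatrix_pow_diag_sub_le hL ha hb i hij hik).trans ?_
  rw [← mul_sum, ← mul_sum, sum_add_distrib]
  calc _ ≤ 2 * n * (2 * (3 * L) ^ n) + n * (3 * L) ^ (n - 1) * (4 *
        (2 * n * ∑ m ∈ range (k - 1), |a (m + 1) - a m| +
          2 * n * ∑ m ∈ range (k - 1), |b (m + 1) - b m|)) := by
        gcongr
        exacts [hvar a, hvar b]
    _ = _ := by ring

theorem isLittleO_log_pow_natCast_rpow (m : ℕ) {s : ℝ} (hs : 0 < s) :
    (fun k : ℕ => Real.log k ^ m) =o[atTop] fun k : ℕ => (k : ℝ) ^ s := by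
  simpa only [Real.rpow_natCast, Function.comp_def] using
    (isLittleO_log_rpow_rpow_atTop (m : ℝ) hs).comp_tendsto tendsto_natCast_atTop_atTop

theorem isLittleO_log_pow_add_log_pow_mul {S : ℕ → ℝ}
    (hS : S =O[atTop] fun k : ℕ => (k : ℝ) ^ (1 / 2 : ℝ)) (c₁ c₂ : ℝ) (n : ℕ) :
    (fun k : ℕ => c₁ * Real.log k ^ n + c₂ * (Real.log k ^ (n - 1) * S k)) =o[atTop]
      fun k : ℕ => (k : ℝ) := by
  have hlead := (isLittleO_log_pow_natCast_rpow n one_pos).const_mul_left c₁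
  have hrest := ((isLittleO_log_pow_natCast_rpow (n - 1) (by norm_num : (0 : ℝ) < 1 / 2)).mul_isBigO
    hS).const_mul_left c₂
  have hsqrt :
      (fun k : ℕ => (k : ℝ) ^ (1 / 2 : ℝ) * (k : ℝ) ^ (1 / 2 : ℝ)) = fun k : ℕ => (k : ℝ) :=
    funext fun k => by rw [← Real.rpow_add' (Nat.cast_nonneg k) (by norm_num)]; norm_num
  simp only [Real.rpow_one] at hlead
  rw [hsqrt] at hrest
  exact hlead.add hrest

theorem MemS'.variation_isBigO {a : ℕ → ℕ → ℝ} (ha : MemS' a) :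
    (fun k : ℕ => ∑ i ∈ range (k - 1), |a k (i + 1) - a k i|) =O[atTop]
      fun k : ℕ => (k : ℝ) ^ (1 / 2 : ℝ) := by
  have h := ha.1 (1 / 2) ⟨by norm_num, by norm_num⟩
  rwa [show (1 : ℝ) - 1 / 2 = 1 / 2 by norm_num] at h

theorem MemS'.exists_abs_le_mul_log {a : ℕ → ℕ → ℝ} (ha : MemS' a) :
    ∃ C, 0 ≤ C ∧ ∀ᶠ k : ℕ in atTop, ∀ i < k, |a k i| ≤ C * Real.log k := by
  obtain ⟨C, hC⟩ := ha.2
  refine ⟨|C|, abs_nonneg C, hC.mono fun k hk i hi => (hk i hi).trans ?_⟩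
  have := Real.log_natCast_nonneg k
  gcongr
  exact le_abs_self C

theorem sum_factorial_mul_sum_eq_sum_tridiagToeplitzPow (a b : ℕ → ℝ) (n k : ℕ) :
    ∑ j ∈ range (n / 2 + 1),
      (n.factorial : ℝ) / ((j.factorial : ℝ) ^ 2 * (n - 2 * j).factorial) *
        ∑ i ∈ range k, a i ^ (n - 2 * j) * b i ^ (2 * j) =
      ∑ i : Fin k, tridiagToeplitzPow (a i) (b i) n 0 := by
  simp only [tridiagToeplitzPow.zero_eq_sum, mul_sum]
  rw [sum_comm, Fin.sum_univ_eq_sum_range (fun i => ∑ j ∈ range (n / 2 + 1),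
    (n.factorial : ℝ) / ((j.factorial : ℝ) ^ 2 * (n - 2 * j).factorial) *
      (a i ^ (n - 2 * j) * b i ^ (2 * j)))]

/-- For `(a^k)ₖ, (b^k)ₖ ∈ 𝒮′` and every `n`,
`Trace[J(a^k,b^k)^n] = ∑_{j=0}^{⌊n/2⌋} n!/((j!)²(n−2j)!) ∑ᵢ (aᵢ^k)^{n−2j}(bᵢ^k)^{2j} + o(k)`. -/
theorem trace_pow_memS' (a b : ℕ → ℕ → ℝ) (ha : MemS' a) (hb : MemS' b) (n : ℕ) :
    (fun k : ℕ =>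
        Matrix.trace ((jacobiMatrix k (a k) (b k)) ^ n) -
          ∑ j ∈ Finset.range (n / 2 + 1),
            (n.factorial : ℝ) / (((j.factorial : ℝ)) ^ 2 * ((n - 2 * j).factorial : ℝ)) *
              ∑ i ∈ Finset.range k, a k i ^ (n - 2 * j) * b k i ^ (2 * j))
      =o[Filter.atTop] fun k : ℕ => (k : ℝ) := by
  obtain ⟨Ca, hCa₀, hCa⟩ := ha.exists_abs_le_mul_log
  obtain ⟨Cb, hCb₀, hCb⟩ := hb.exists_abs_le_mul_log
  set C := Ca + Cb
  refine IsBigO.trans_isLittleO (IsBigO.of_bound' ?_) (isLittleO_log_pow_add_log_pow_mul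
    (ha.variation_isBigO.add hb.variation_isBigO) (4 * n * (3 * C) ^ n)
    (8 * n ^ 2 * (3 * C) ^ (n - 1)) n)
  filter_upwards [hCa, hCb] with k hka hkb
  have hlog := Real.log_natCast_nonneg k
  rw [sum_factorial_mul_sum_eq_sum_tridiagToeplitzPow, Real.norm_eq_abs]
  refine (abs_trace_jacobiMatrix_pow_sub_le k n (L := C * Real.log k) (by positivity)
    (fun i hi => (hka i hi).trans (by gcongr; linarith))
    (fun i hi => (hkb i hi).trans (by gcongr; linarith))).trans (le_of_eq_of_le ?_ (le_abs_self _))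
  simp only [← mul_assoc 3 C, mul_pow]
  ring
end
end

section
/- Let (a^k)_k and (b^k)_k be two sequences of vectors belonging to the class 𝒮. For each k let D_k = diag(a_1^k,…,a_k^k) and let L_k be the k×k lower shift matrix whose only nonzero entries are (L_k)_{i+1,i} = b_i^k for i = 1,…,k−1. Fix n ∈ ℕ, a word w = (w_1,…,w_n) with each w_m ∈ {L, D, T}, and an index 1 ≤ i < n; for each k let A_m^k = L_k if w_m = L, A_m^k = D_k if w_m = D, and A_m^k = L_k^T if w_m = T. Then (1/k)·Trace[A_1^k ⋯ A_i^k A_{i+1}^k ⋯ A_n^k] = (1/k)·Trace[A_1^k ⋯ A_{i+1}^k A_i^k ⋯ A_n^k] + o(1) as k → ∞; i.e., swapping two consecutive factors changes the normalized trace by o(1). -/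
open Filter MeasureTheory

noncomputable section

/-- The lower shift matrix `L_k` with `(L_k)_{i+1,i} = b i` (0-indexed). -/
def lowerMat (k : ℕ) (b : ℕ → ℝ) : Matrix (Fin k) (Fin k) ℝ :=
  Matrix.of fun i j => if (j : ℕ) + 1 = (i : ℕ) then b j else 0

/-- The diagonal matrix `D_k = diag(a 0, …, a (k-1))`. -/
def diagMat (k : ℕ) (a : ℕ → ℝ) : Matrix (Fin k) (Fin k) ℝ :=
  Matrix.diagonal fun i : Fin k => a i

/-- The matrix associated to a letter of the alphabet `{L, D, Lᵀ}` (encoded as `Fin 3`). -/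
def letterMat (k : ℕ) (a b : ℕ → ℝ) : Fin 3 → Matrix (Fin k) (Fin k) ℝ
  | 0 => lowerMat k b
  | 1 => diagMat k a
  | 2 => (lowerMat k b).transpose

/-- The matrix product `A_1 ⋯ A_n` associated to a word `w` in the letters `{L, D, Lᵀ}`. -/
def wordProd (k n : ℕ) (a b : ℕ → ℝ) (w : ℕ → Fin 3) : Matrix (Fin k) (Fin k) ℝ :=
  ((List.range n).map fun m => letterMat k a b (w m)).prod

/-!
Write the word as `X * A * B * T`, where `A` and `B` are the two letters being swapped; the two
traces then differ by `trace ((A * B - B * A) * (T * X))`. Every letter has maximal absolute row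
sum at most `1`, hence so has `T * X`, and `|trace (C * M)|` is at most the sum of the absolute
entries of `C` times that norm of `M`. The commutators of the letters have absolute entry sums
controlled by the variations `V(a) = ∑ |a (j + 1) - a j|` and `V(b)`: the subdiagonal entries of
`L * D - D * L` are `b j * (a j - a (j + 1))`, and `L * Lᵀ - Lᵀ * L` is diagonal with entries
`b (j - 1) ^ 2 - b j ^ 2` except at the two corners. This gives the bound `(V(a) + 2 V(b) + 2) / k`,
which is `o(1)` for sequences in `𝒮`.
-/

open Finset Matrix

attribute [local instance] Matrix.linftyOpNormedAddCommGroup Matrix.linftyOpNormedRing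

def sumAbsEntries {m n : Type*} [Fintype m] [Fintype n] (C : Matrix m n ℝ) : ℝ :=
  ∑ i, ∑ j, |C i j|

def discreteVariation (k : ℕ) (a : ℕ → ℝ) : ℝ :=
  ∑ i ∈ range (k - 1), |a (i + 1) - a i|

theorem discreteVariation_nonneg (k : ℕ) (a : ℕ → ℝ) : 0 ≤ discreteVariation k a :=
  sum_nonneg fun _ _ => abs_nonneg _

theorem List.norm_prod_le_one {R : Type*} [SeminormedRing R] (h₁ : ‖(1 : R)‖ ≤ 1) (l : List R)
    (h : ∀ x ∈ l, ‖x‖ ≤ 1) : ‖l.prod‖ ≤ 1 := by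
  induction l with
  | nil => exact h₁
  | cons x l ih =>
    rw [List.prod_cons]
    simp only [List.mem_cons, forall_eq_or_imp] at h
    exact (norm_mul_le _ _).trans (mul_le_one₀ h.1 (norm_nonneg _) (ih h.2))

theorem abs_sq_sub_sq_le {x y : ℝ} (hx : |x| ≤ 1) (hy : |y| ≤ 1) :
    |x ^ 2 - y ^ 2| ≤ 2 * |x - y| := by
  rw [sq_sub_sq, abs_mul]
  exact mul_le_mul_of_nonneg_right ((abs_add_le x y).trans (by linarith)) (abs_nonneg _)

theorem Fin.sum_ite_val_eq {M : Type*} [AddCommMonoid M] (k j : ℕ) (f : ℕ → M) :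
    ∑ l : Fin k, (if (l : ℕ) = j then f l else 0) = if j < k then f j else 0 := by
  rw [Fin.sum_univ_eq_sum_range (fun l => if l = j then f l else 0), sum_ite_eq']
  simp only [mem_range]

theorem sum_sum_ite_succ_eq (k : ℕ) (f : ℕ → ℝ) :
    ∑ q : Fin k, ∑ r : Fin k, (if (r : ℕ) + 1 = q then f r else 0) =
      ∑ j ∈ range (k - 1), f j := by
  have inner : ∀ r : Fin k, ∑ q : Fin k, (if (r : ℕ) + 1 = q then f r else 0) =
      if (r : ℕ) + 1 < k then f r else 0 := fun r => by
    simpa [eq_comm] using Fin.sum_ite_val_eq k ((r : ℕ) + 1) (fun _ => f r)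
  rw [sum_comm, sum_congr rfl fun r _ => inner r,
    Fin.sum_univ_eq_sum_range (fun j => if j + 1 < k then f j else 0), ← sum_filter]
  congr 1
  ext j
  simp only [mem_filter, mem_range]
  omega

namespace Matrix

section LinftyOp

variable {m n α : Type*} [Fintype m] [Fintype n]

theorem linfty_opNorm_le_iff [NormedAddCommGroup α] {A : Matrix m n α} {r : ℝ} (hr : 0 ≤ r) :
    ‖A‖ ≤ r ↔ ∀ i, ∑ j, ‖A i j‖ ≤ r := by
  change ‖fun i => WithLp.toLp 1 (A i)‖ ≤ r ↔ _
  simp [pi_norm_le_iff_of_nonneg hr, PiLp.norm_eq_of_L1]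

theorem norm_entry_le_linfty_opNorm [NormedAddCommGroup α] (A : Matrix m n α) (i : m) (j : n) :
    ‖A i j‖ ≤ ‖A‖ :=
  calc ‖A i j‖ ≤ ∑ j', ‖A i j'‖ :=
        single_le_sum (f := fun j' => ‖A i j'‖) (fun _ _ => norm_nonneg _) (mem_univ j)
    _ = ‖WithLp.toLp 1 (A i)‖ := by simp [PiLp.norm_eq_of_L1]
    _ ≤ ‖A‖ := norm_le_pi_norm (fun i => WithLp.toLp 1 (A i)) i

theorem linfty_opNorm_one_le [DecidableEq n] [NormedRing α] [NormOneClass α] :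
    ‖(1 : Matrix n n α)‖ ≤ 1 := by
  rw [← diagonal_one, linfty_opNorm_diagonal]
  exact (pi_norm_le_iff_of_nonneg zero_le_one).2 fun _ => by simp

theorem abs_trace_mul_le (C M : Matrix n n ℝ) : |trace (C * M)| ≤ sumAbsEntries C * ‖M‖ := by
  simp only [trace, Matrix.diag, mul_apply, sumAbsEntries, sum_mul]
  refine (abs_sum_le_sum_abs _ _).trans (sum_le_sum fun i _ => ?_)
  refine (abs_sum_le_sum_abs _ _).trans (sum_le_sum fun j _ => ?_)
  rw [abs_mul]
  exact mul_le_mul_of_nonneg_left (norm_entry_le_linfty_opNorm M j i) (abs_nonneg _)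

end LinftyOp

theorem trace_mul_mul_mul_sub_swap {n R : Type*} [Fintype n] [CommRing R]
    (X A B T : Matrix n n R) :
    trace (X * A * B * T) - trace (X * B * A * T) = trace ((A * B - B * A) * (T * X)) := by
  rw [← trace_sub, show X * A * B * T - X * B * A * T = X * ((A * B - B * A) * T) by noncomm_ring,
    trace_mul_comm, mul_assoc]

end Matrix

section SumAbsEntries

variable {m n : Type*} [Fintype m] [Fintype n]

theorem sumAbsEntries_nonneg (C : Matrix m n ℝ) : 0 ≤ sumAbsEntries C := by
  unfold sumAbsEntries
  positivity

@[simp]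
theorem sumAbsEntries_zero : sumAbsEntries (0 : Matrix m n ℝ) = 0 := by
  simp [sumAbsEntries]

theorem sumAbsEntries_transpose (C : Matrix m n ℝ) : sumAbsEntries Cᵀ = sumAbsEntries C :=
  sum_comm

theorem sumAbsEntries_neg (C : Matrix m n ℝ) : sumAbsEntries (-C) = sumAbsEntries C := by
  simp [sumAbsEntries]

theorem sumAbsEntries_diagonal [DecidableEq n] (d : n → ℝ) :
    sumAbsEntries (diagonal d) = ∑ i, |d i| :=
  sum_congr rfl fun i _ => by
    rw [sum_eq_single i (fun j _ hji => by simp [diagonal_apply_ne _ hji.symm]) (by simp)]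
    simp

end SumAbsEntries

section Letters

variable {k : ℕ} {a b : ℕ → ℝ}

theorem lowerMat_apply (b : ℕ → ℝ) (q r : Fin k) :
    lowerMat k b q r = if (r : ℕ) + 1 = q then b r else 0 := rfl

theorem norm_lowerMat_le_one (hb : ∀ j < k, |b j| ≤ 1) : ‖lowerMat k b‖ ≤ 1 := by
  refine (linfty_opNorm_le_iff (A := lowerMat k b) zero_le_one).2 fun q => ?_
  calc ∑ r, ‖lowerMat k b q r‖ ≤ ∑ r : Fin k, (if (r : ℕ) = q - 1 then (1 : ℝ) else 0) := by
        refine sum_le_sum fun r _ => ?_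
        rw [Real.norm_eq_abs, lowerMat_apply]
        split_ifs <;> first | exact hb _ r.isLt | omega | simp
    _ ≤ 1 := by rw [Fin.sum_ite_val_eq k _ fun _ => (1 : ℝ)]; split_ifs <;> norm_num

theorem norm_transpose_lowerMat_le_one (hb : ∀ j < k, |b j| ≤ 1) : ‖(lowerMat k b)ᵀ‖ ≤ 1 := by
  refine (linfty_opNorm_le_iff (A := (lowerMat k b)ᵀ) zero_le_one).2 fun q => ?_
  calc ∑ r, ‖(lowerMat k b)ᵀ q r‖ ≤ ∑ r : Fin k, (if (r : ℕ) = q + 1 then (1 : ℝ) else 0) := by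
        refine sum_le_sum fun r _ => ?_
        rw [Real.norm_eq_abs, transpose_apply, lowerMat_apply]
        split_ifs <;> first | exact hb _ q.isLt | omega | simp
    _ ≤ 1 := by rw [Fin.sum_ite_val_eq k _ fun _ => (1 : ℝ)]; split_ifs <;> norm_num

theorem norm_diagMat_le_one (ha : ∀ j < k, |a j| ≤ 1) : ‖diagMat k a‖ ≤ 1 := by
  rw [diagMat, linfty_opNorm_diagonal]
  exact (pi_norm_le_iff_of_nonneg zero_le_one).2 fun q => ha _ q.isLt

theorem norm_letterMat_le_one (ha : ∀ j < k, |a j| ≤ 1) (hb : ∀ j < k, |b j| ≤ 1) (s : Fin 3) :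
    ‖letterMat k a b s‖ ≤ 1 := by
  fin_cases s
  exacts [norm_lowerMat_le_one hb, norm_diagMat_le_one ha, norm_transpose_lowerMat_le_one hb]

theorem norm_wordProd_le_one (ha : ∀ j < k, |a j| ≤ 1) (hb : ∀ j < k, |b j| ≤ 1) (n : ℕ)
    (w : ℕ → Fin 3) : ‖wordProd k n a b w‖ ≤ 1 :=
  List.norm_prod_le_one linfty_opNorm_one_le _ fun A hA => by
    obtain ⟨m, -, rfl⟩ := List.mem_map.1 hA
    exact norm_letterMat_le_one ha hb _

end Letters

section Commutators

variable {k : ℕ} {a b : ℕ → ℝ}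

theorem commutator_lowerMat_diagMat :
    lowerMat k b * diagMat k a - diagMat k a * lowerMat k b =
      of fun q r => lowerMat k b q r * (a r - a q) := by
  ext q r
  simp only [diagMat, Matrix.sub_apply, mul_diagonal, diagonal_mul, of_apply]
  ring

theorem sumAbsEntries_commutator_lowerMat_diagMat_le (hb : ∀ j < k, |b j| ≤ 1) :
    sumAbsEntries (lowerMat k b * diagMat k a - diagMat k a * lowerMat k b) ≤
      discreteVariation k a := by
  rw [commutator_lowerMat_diagMat, sumAbsEntries, discreteVariation,
    ← sum_sum_ite_succ_eq k fun j => |a (j + 1) - a j|]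
  gcongr with q _ r
  rw [of_apply, lowerMat_apply]
  split_ifs with h
  · rw [abs_mul, ← h, abs_sub_comm]
    exact mul_le_of_le_one_left (abs_nonneg _) (hb _ r.isLt)
  · simp

theorem commutator_diagMat_transpose_lowerMat :
    diagMat k a * (lowerMat k b)ᵀ - (lowerMat k b)ᵀ * diagMat k a =
      (lowerMat k b * diagMat k a - diagMat k a * lowerMat k b)ᵀ := by
  simp [transpose_sub, transpose_mul, diagMat]

theorem lowerMat_mul_transpose :
    lowerMat k b * (lowerMat k b)ᵀ =
      diagonal fun q : Fin k => if 1 ≤ (q : ℕ) then b (q - 1) ^ 2 else 0 := by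
  ext q r
  rw [mul_apply, diagonal_apply]
  rcases eq_or_ne q r with rfl | hqr
  · have hterm : ∀ l : Fin k, lowerMat k b q l * (lowerMat k b)ᵀ l q =
        if (l : ℕ) = q - 1 then (if 1 ≤ (q : ℕ) then b l ^ 2 else 0) else 0 := fun l => by
      simp only [transpose_apply, lowerMat_apply]
      split_ifs <;> first | omega | ring
    rw [sum_congr rfl fun l _ => hterm l,
      Fin.sum_ite_val_eq k _ fun l => if 1 ≤ (q : ℕ) then b l ^ 2 else 0, if_pos rfl,
      if_pos (by omega)]
  · have := Fin.val_ne_of_ne hqr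
    rw [if_neg hqr]
    refine sum_eq_zero fun l _ => ?_
    simp only [transpose_apply, lowerMat_apply]
    split_ifs <;> first | omega | simp

theorem transpose_mul_lowerMat :
    (lowerMat k b)ᵀ * lowerMat k b =
      diagonal fun q : Fin k => if (q : ℕ) + 1 < k then b q ^ 2 else 0 := by
  ext q r
  rw [mul_apply, diagonal_apply]
  rcases eq_or_ne q r with rfl | hqr
  · have hterm : ∀ l : Fin k, (lowerMat k b)ᵀ q l * lowerMat k b l q =
        if (l : ℕ) = q + 1 then b q ^ 2 else 0 := fun l => by
      simp only [transpose_apply, lowerMat_apply]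
      split_ifs <;> first | omega | ring
    rw [sum_congr rfl fun l _ => hterm l, Fin.sum_ite_val_eq k _ fun _ => b q ^ 2, if_pos rfl]
  · have := Fin.val_ne_of_ne hqr
    rw [if_neg hqr]
    refine sum_eq_zero fun l _ => ?_
    simp only [transpose_apply, lowerMat_apply]
    split_ifs <;> first | omega | simp

theorem sum_abs_shift_sq_sub_sq_le (hb : ∀ j < k, |b j| ≤ 1) :
    ∑ q ∈ range k, |(if 1 ≤ q then b (q - 1) ^ 2 else 0) - (if q + 1 < k then b q ^ 2 else 0)| ≤
      2 * discreteVariation k b + 2 := by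
  obtain _ | m := k
  · simp [discreteVariation]
  have hsq : ∀ j ≤ m, b j ^ 2 ≤ 1 := fun j hj => (sq_le_one_iff_abs_le_one _).2 (hb j (by omega))
  have hterm : ∀ j ∈ range m, |b j ^ 2 - (if j + 1 + 1 < m + 1 then b (j + 1) ^ 2 else 0)| ≤
      2 * |b (j + 1) - b j| + if j = m - 1 then 1 else 0 := by
    intro j hj
    rw [mem_range] at hj
    split_ifs with hlast hlast'
    · omega
    · rw [abs_sub_comm (b (j + 1))]
      linarith [abs_sq_sub_sq_le (hb j (by omega)) (hb (j + 1) (by omega))]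
    · rw [sub_zero, abs_sq]
      linarith [abs_nonneg (b (j + 1) - b j), hsq j (by omega)]
    · omega
  rw [sum_range_succ']
  simp only [add_tsub_cancel_right, le_add_iff_nonneg_left, zero_le, if_true]
  calc _ ≤ ∑ j ∈ range m, (2 * |b (j + 1) - b j| + if j = m - 1 then 1 else 0) + 1 := by
        gcongr with j hj
        · exact hterm j hj
        · split_ifs <;> simp [hb 0 m.succ_pos]
    _ ≤ 2 * discreteVariation (m + 1) b + 2 := by
        rw [sum_add_distrib, ← mul_sum, sum_ite_eq', discreteVariation, add_tsub_cancel_right]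
        split_ifs <;> linarith

theorem sumAbsEntries_commutator_lowerMat_transpose_le (hb : ∀ j < k, |b j| ≤ 1) :
    sumAbsEntries (lowerMat k b * (lowerMat k b)ᵀ - (lowerMat k b)ᵀ * lowerMat k b) ≤
      2 * discreteVariation k b + 2 := by
  rw [lowerMat_mul_transpose, transpose_mul_lowerMat, diagonal_sub, sumAbsEntries_diagonal,
    Fin.sum_univ_eq_sum_range (fun q => |(if 1 ≤ q then b (q - 1) ^ 2 else 0) -
      (if q + 1 < k then b q ^ 2 else 0)|)]
  exact sum_abs_shift_sq_sub_sq_le hb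

theorem sumAbsEntries_commutator_letterMat_le (hb : ∀ j < k, |b j| ≤ 1) (s t : Fin 3) :
    sumAbsEntries (letterMat k a b s * letterMat k a b t - letterMat k a b t * letterMat k a b s) ≤
      discreteVariation k a + (2 * discreteVariation k b + 2) := by
  have hLD := sumAbsEntries_commutator_lowerMat_diagMat_le (a := a) hb
  have hLT := sumAbsEntries_commutator_lowerMat_transpose_le hb
  have hDT : sumAbsEntries (diagMat k a * (lowerMat k b)ᵀ - (lowerMat k b)ᵀ * diagMat k a) ≤
      discreteVariation k a := by
    rwa [commutator_diagMat_transpose_lowerMat, sumAbsEntries_transpose]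
  have hswap : ∀ A B : Matrix (Fin k) (Fin k) ℝ,
      sumAbsEntries (B * A - A * B) = sumAbsEntries (A * B - B * A) := fun A B => by
    rw [← neg_sub, sumAbsEntries_neg]
  have := discreteVariation_nonneg k a
  have := discreteVariation_nonneg k b
  fin_cases s <;> fin_cases t <;>
    simp only [letterMat, sub_self, sumAbsEntries_zero] <;> first | linarith | rw [hswap]; linarith

end Commutators

section Words

variable {k : ℕ} {a b : ℕ → ℝ}

theorem wordProd_congr {n : ℕ} {w w' : ℕ → Fin 3} (h : ∀ m < n, w m = w' m) :
    wordProd k n a b w = wordProd k n a b w' := by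
  unfold wordProd
  rw [List.map_congr_left fun m hm => by rw [h m (List.mem_range.1 hm)]]

theorem wordProd_add (p q : ℕ) (w : ℕ → Fin 3) :
    wordProd k (p + q) a b w = wordProd k p a b w * wordProd k q a b fun m => w (p + m) := by
  simp only [wordProd, List.range_add, List.map_append, List.prod_append, List.map_map]
  rfl

theorem wordProd_two (w : ℕ → Fin 3) :
    wordProd k 2 a b w = letterMat k a b (w 0) * letterMat k a b (w 1) := by
  simp [wordProd, List.range_succ]

theorem wordProd_eq_of_add_two_le {n i : ℕ} (w : ℕ → Fin 3) (hi : i + 2 ≤ n) :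
    wordProd k n a b w = wordProd k i a b w * letterMat k a b (w i) *
      letterMat k a b (w (i + 1)) * wordProd k (n - (i + 2)) a b fun m => w (i + 2 + m) := by
  obtain ⟨r, rfl⟩ : ∃ r, n = i + 2 + r := ⟨n - (i + 2), by omega⟩
  rw [wordProd_add, wordProd_add, wordProd_two, Nat.add_sub_cancel_left]
  simp only [add_zero, mul_assoc]

theorem abs_trace_wordProd_sub_swap_le (ha : ∀ j < k, |a j| ≤ 1) (hb : ∀ j < k, |b j| ≤ 1)
    {n i : ℕ} (w : ℕ → Fin 3) (hi : i + 1 < n) :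
    |trace (wordProd k n a b w) - trace (wordProd k n a b (w ∘ Equiv.swap i (i + 1)))| ≤
      discreteVariation k a + (2 * discreteVariation k b + 2) := by
  have hprefix : wordProd k i a b (w ∘ Equiv.swap i (i + 1)) = wordProd k i a b w :=
    wordProd_congr fun m hm => by
      simp [Equiv.swap_apply_of_ne_of_ne (by omega : m ≠ i) (by omega : m ≠ i + 1)]
  have hsuffix : (fun m => (w ∘ Equiv.swap i (i + 1)) (i + 2 + m)) = fun m => w (i + 2 + m) :=
    funext fun m => by simp [Equiv.swap_apply_of_ne_of_ne (by omega : i + 2 + m ≠ i)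
      (by omega : i + 2 + m ≠ i + 1)]
  rw [wordProd_eq_of_add_two_le w hi, wordProd_eq_of_add_two_le _ hi, hprefix, hsuffix]
  simp only [Function.comp_apply, Equiv.swap_apply_left, Equiv.swap_apply_right]
  rw [trace_mul_mul_mul_sub_swap]
  have hnorm : ‖(wordProd k (n - (i + 2)) a b fun m => w (i + 2 + m)) * wordProd k i a b w‖ ≤ 1 :=
    (norm_mul_le _ _).trans (mul_le_one₀ (norm_wordProd_le_one ha hb _ _) (norm_nonneg _)
      (norm_wordProd_le_one ha hb _ _))
  exact (abs_trace_mul_le _ _).trans <|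
    (mul_le_of_le_one_right (sumAbsEntries_nonneg _) hnorm).trans
      (sumAbsEntries_commutator_letterMat_le hb _ _)

end Words

theorem MemS.abs_le_one {a : ℕ → ℕ → ℝ} (ha : MemS a) (k : ℕ) : ∀ j < k, |a k j| ≤ 1 :=
  fun j hj => abs_le.2 ⟨by linarith [(ha.2 k j hj).1], (ha.2 k j hj).2⟩

theorem MemS.tendsto_discreteVariation_div {a : ℕ → ℕ → ℝ} (ha : MemS a) :
    Tendsto (fun k : ℕ => discreteVariation k (a k) / k) atTop (nhds 0) :=
  ha.1.tendsto_div_nhds_zero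

/-- for `(a^k)ₖ, (b^k)ₖ ∈ 𝒮`, swapping two consecutive factors in a word in
`{L_k, D_k, L_kᵀ}` changes the normalized trace by `o(1)`. -/
theorem trace_word_swap (a b : ℕ → ℕ → ℝ) (ha : MemS a) (hb : MemS b)
    (n : ℕ) (w : ℕ → Fin 3) (i : ℕ) (hi : i + 1 < n) :
    Filter.Tendsto
      (fun k : ℕ =>
        (1 / (k : ℝ)) * Matrix.trace (wordProd k n (a k) (b k) w) -
          (1 / (k : ℝ)) * Matrix.trace (wordProd k n (a k) (b k)
            (fun m => if m = i then w (i + 1) else if m = i + 1 then w i else w m)))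
      Filter.atTop (nhds 0) := by
  have hswap : (fun m => if m = i then w (i + 1) else if m = i + 1 then w i else w m) =
      w ∘ Equiv.swap i (i + 1) := by
    funext m
    simp only [Function.comp_apply, Equiv.swap_apply_def, apply_ite w]
  have hlim : Tendsto (fun k : ℕ =>
      (discreteVariation k (a k) + (2 * discreteVariation k (b k) + 2)) / k) atTop (nhds 0) := by
    simpa [add_div, mul_div_assoc] using ha.tendsto_discreteVariation_div.add
      ((hb.tendsto_discreteVariation_div.const_mul 2).add (tendsto_const_div_atTop_nhds_zero_nat 2))
  refine squeeze_zero_norm (fun k => ?_) hlim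
  rw [hswap, ← mul_sub, norm_mul, Real.norm_eq_abs, Real.norm_eq_abs,
    abs_of_nonneg (by positivity), one_div_mul_eq_div]
  exact div_le_div_of_nonneg_right
    (abs_trace_wordProd_sub_swap_le (ha.abs_le_one k) (hb.abs_le_one k) w hi) k.cast_nonneg
end
end
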